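/- Let N, r ≥ 1, let {A_k}_{k≥1} be N×N row-stochastic matrices with an absolute probability sequence {φ_k} (stochastic vectors with φ_kᵀ = φ_{k+1}ᵀ A_k), write Φ_A(k,s) = A_k A_{k−1}⋯A_s, and suppose there exist C > 0 and β ∈ (0,1) with ‖Φ_A(k,s) − 1_N φ_sᵀ‖ ≤ C β^{k−s} for all k ≥ s ≥ 1. Let {ω^k}_{k≥1} ⊆ ℝ^{N×r} satisfy ω^{k+1} = A_k ω^k + d^k with ‖d^k‖ ≤ K α_k for a constant K > 0 and non-negative reals α_k. Then there exist constants C₂, C₃, C₄ > 0 such that for all k ≥ 1, ‖ω^{k+1} − 1_N φ_{k+1}ᵀ ω^{k+1}‖ ≤ C₂ β^{k−1} + C₃ ∑_{l=1}^{k−1} β^{k−1−l} α_l + C₄ α_k. -/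

import Mathlib

/-- Frobenius norm of a real matrix. -/
noncomputable def frobNorm {ι κ : Type*} [Fintype ι] [Fintype κ]
    (M : ι → κ → ℝ) : ℝ :=
  Real.sqrt (∑ i, ∑ j, (M i j) ^ 2)

/-- `PhiA A s t` is the backward matrix product Φ_A(s+t, s) = A(s+t)⋯A(s). -/
def PhiA {N : ℕ} (A : ℕ → Matrix (Fin N) (Fin N) ℝ) (s : ℕ) :
    ℕ → Matrix (Fin N) (Fin N) ℝ
  | 0 => A s
  | t + 1 => A (s + t + 1) * PhiA A s t

/-!
Write `J_k = 1 φ_kᵀ`. Unrolling the recursion gives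
`ω^{k+1} = Φ(k,1) ω^1 + ∑_{1 ≤ l < k} Φ(k,l+1) d^l + d^k`, and the absolute-probability identity
`J_{k+1} A_k = J_k` propagates to `J_{k+1} Φ(k,s) = J_s`. Hence the consensus error
`ω^{k+1} - J_{k+1} ω^{k+1}` equals
`(Φ(k,1) - J_1) ω^1 + ∑_{1 ≤ l < k} (Φ(k,l+1) - J_{l+1}) d^l + (d^k - J_{k+1} d^k)`,
and each term is bounded by submultiplicativity of the Frobenius norm, the geometric mixing
bound on `Φ(k,s) - J_s`, and `‖J_k‖ ≤ √N` for a stochastic vector `φ_k`.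
-/

open Matrix Finset
open scoped Matrix.Norms.Frobenius

section Frobenius

variable {ι κ : Type*} [Fintype ι] [Fintype κ]

theorem frobNorm_eq_norm (M : Matrix ι κ ℝ) : frobNorm M = ‖M‖ := by
  simp only [frobNorm, frobenius_norm_def, Real.norm_eq_abs, Real.rpow_two, sq_abs,
    Real.sqrt_eq_rpow]

theorem norm_replicateRow_le_sqrt_card {v : κ → ℝ} (hv : (∀ j, 0 ≤ v j) ∧ ∑ j, v j = 1) :
    ‖replicateRow ι v‖ ≤ √(Fintype.card ι) := by
  obtain ⟨hv0, hv1⟩ := hv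
  have hsq : ∑ j, v j ^ 2 ≤ 1 := calc
    ∑ j, v j ^ 2 ≤ ∑ j, v j := by
      refine sum_le_sum fun j _ => ?_
      have : v j ≤ 1 := hv1 ▸ single_le_sum (fun i _ => hv0 i) (mem_univ j)
      nlinarith [hv0 j]
    _ = 1 := hv1
  rw [← frobNorm_eq_norm]
  unfold frobNorm
  refine Real.sqrt_le_sqrt ?_
  simp only [replicateRow_apply, sum_const, card_univ, nsmul_eq_mul]
  nlinarith [(Fintype.card ι).cast_nonneg (α := ℝ)]

end Frobenius

section Recursion

variable {N : ℕ} {m : Type*} {A : ℕ → Matrix (Fin N) (Fin N) ℝ}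

theorem mul_PhiA {s t k : ℕ} (h : s + t + 1 = k) : A k * PhiA A s t = PhiA A s (t + 1) := by
  subst h; rfl

theorem replicateRow_mul_PhiA {ι : Type*} {φ : ℕ → Fin N → ℝ}
    (hφ : ∀ k, 1 ≤ k → ∀ j, φ k j = ∑ i, φ (k + 1) i * A k i j)
    {s t k : ℕ} (hs : 1 ≤ s) (h : s + t + 1 = k) :
    replicateRow ι (φ k) * PhiA A s t = replicateRow ι (φ s) := by
  have step : ∀ k, 1 ≤ k → replicateRow ι (φ (k + 1)) * A k = replicateRow ι (φ k) := by
    intro k hk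
    ext i j
    simp only [mul_apply, replicateRow_apply, hφ k hk j]
  subst h
  induction t with
  | zero => exact step s hs
  | succ t ih =>
    change replicateRow ι (φ (s + t + 1 + 1)) * (A (s + t + 1) * PhiA A s t) = _
    rw [← Matrix.mul_assoc, step _ (by omega), ih]

theorem eq_PhiA_mul_add_sum {ω d : ℕ → Matrix (Fin N) m ℝ}
    (hrec : ∀ k, 1 ≤ k → ω (k + 1) = A k * ω k + d k) (t : ℕ) :
    ω (t + 2) = PhiA A 1 t * ω 1
      + ∑ l ∈ Ico 1 (t + 1), PhiA A (l + 1) (t - l) * d l + d (t + 1) := by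
  induction t with
  | zero => simpa [PhiA] using hrec 1 le_rfl
  | succ t ih =>
    have hsum : A (t + 2) * ∑ l ∈ Ico 1 (t + 1), PhiA A (l + 1) (t - l) * d l
        = ∑ l ∈ Ico 1 (t + 1), PhiA A (l + 1) (t + 1 - l) * d l := by
      rw [Matrix.mul_sum]
      refine sum_congr rfl fun l hl => ?_
      have hlt : l < t + 1 := (mem_Ico.mp hl).2
      rw [← Matrix.mul_assoc, mul_PhiA (by omega), show t - l + 1 = t + 1 - l by omega]
    rw [hrec (t + 2) (by omega), ih, Matrix.mul_add, Matrix.mul_add, ← Matrix.mul_assoc,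
      mul_PhiA (by omega), hsum, sum_Ico_succ_top (b := t + 1) (by omega), Nat.sub_self,
      ← add_assoc]
    rfl

theorem sub_replicateRow_mul_eq_sum {φ : ℕ → Fin N → ℝ} {ω d : ℕ → Matrix (Fin N) m ℝ}
    (hφ : ∀ k, 1 ≤ k → ∀ j, φ k j = ∑ i, φ (k + 1) i * A k i j)
    (hrec : ∀ k, 1 ≤ k → ω (k + 1) = A k * ω k + d k) (t : ℕ) :
    ω (t + 2) - replicateRow (Fin N) (φ (t + 2)) * ω (t + 2)
      = (PhiA A 1 t - replicateRow (Fin N) (φ 1)) * ω 1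
        + ∑ l ∈ Ico 1 (t + 1), (PhiA A (l + 1) (t - l) - replicateRow (Fin N) (φ (l + 1))) * d l
        + (d (t + 1) - replicateRow (Fin N) (φ (t + 2)) * d (t + 1)) := by
  have hsum : replicateRow (Fin N) (φ (t + 2)) * ∑ l ∈ Ico 1 (t + 1), PhiA A (l + 1) (t - l) * d l
      = ∑ l ∈ Ico 1 (t + 1), replicateRow (Fin N) (φ (l + 1)) * d l := by
    rw [Matrix.mul_sum]
    refine sum_congr rfl fun l hl => ?_
    have hlt : l < t + 1 := (mem_Ico.mp hl).2
    rw [← Matrix.mul_assoc, replicateRow_mul_PhiA hφ (by omega) (by omega)]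
  rw [eq_PhiA_mul_add_sum hrec, Matrix.mul_add, Matrix.mul_add, ← Matrix.mul_assoc,
    replicateRow_mul_PhiA hφ le_rfl (by omega), hsum]
  simp only [Matrix.sub_mul, sum_sub_distrib]
  abel

end Recursion

theorem norm_sub_replicateRow_mul_le {N : ℕ} {m : Type*} [Fintype m]
    {A : ℕ → Matrix (Fin N) (Fin N) ℝ} {φ : ℕ → Fin N → ℝ} {ω d : ℕ → Matrix (Fin N) m ℝ}
    {C β K : ℝ} {α : ℕ → ℝ} (hφstoch : ∀ k, (∀ j, 0 ≤ φ k j) ∧ ∑ j, φ k j = 1)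
    (hφ : ∀ k, 1 ≤ k → ∀ j, φ k j = ∑ i, φ (k + 1) i * A k i j)
    (hmix : ∀ s t, 1 ≤ s → ‖PhiA A s t - replicateRow (Fin N) (φ s)‖ ≤ C * β ^ t)
    (hrec : ∀ k, 1 ≤ k → ω (k + 1) = A k * ω k + d k) (hd : ∀ k, 1 ≤ k → ‖d k‖ ≤ K * α k)
    (t : ℕ) :
    ‖ω (t + 2) - replicateRow (Fin N) (φ (t + 2)) * ω (t + 2)‖
      ≤ C * β ^ t * ‖ω 1‖ + C * K * ∑ l ∈ Ico 1 (t + 1), β ^ (t - l) * α l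
        + (1 + √N) * K * α (t + 1) := by
  have hJ : ‖replicateRow (Fin N) (φ (t + 2))‖ ≤ √N := by
    simpa using norm_replicateRow_le_sqrt_card (ι := Fin N) (hφstoch (t + 2))
  have hlast : ‖d (t + 1) - replicateRow (Fin N) (φ (t + 2)) * d (t + 1)‖
      ≤ (1 + √N) * K * α (t + 1) := calc
    _ ≤ ‖d (t + 1)‖ + ‖replicateRow (Fin N) (φ (t + 2))‖ * ‖d (t + 1)‖ :=
      (norm_sub_le _ _).trans (add_le_add_right (frobenius_norm_mul _ _) _)
    _ ≤ (1 + √N) * ‖d (t + 1)‖ := by nlinarith [norm_nonneg (d (t + 1))]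
    _ ≤ (1 + √N) * (K * α (t + 1)) := by gcongr; exact hd _ (by omega)
    _ = (1 + √N) * K * α (t + 1) := by ring
  rw [sub_replicateRow_mul_eq_sum hφ hrec, mul_sum]
  refine norm_add₃_le.trans (add_le_add_three ?_ ?_ hlast)
  · exact (frobenius_norm_mul _ _).trans
      (mul_le_mul_of_nonneg_right (hmix 1 t le_rfl) (norm_nonneg _))
  · refine (norm_sum_le _ _).trans (sum_le_sum fun l hl => ?_)
    have hl : 1 ≤ l := (mem_Ico.mp hl).1
    have hΦ := hmix (l + 1) (t - l) (by omega)
    calc _ ≤ ‖PhiA A (l + 1) (t - l) - replicateRow (Fin N) (φ (l + 1))‖ * ‖d l‖ :=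
          frobenius_norm_mul _ _
      _ ≤ C * β ^ (t - l) * (K * α l) :=
          mul_le_mul hΦ (hd l hl) (norm_nonneg _) ((norm_nonneg _).trans hΦ)
      _ = C * K * (β ^ (t - l) * α l) := by ring

theorem stmt10_general (N r : ℕ)
    (A : ℕ → Matrix (Fin N) (Fin N) ℝ)
    (φ : ℕ → Fin N → ℝ)
    (hφstoch : ∀ k, (∀ j, 0 ≤ φ k j) ∧ ∑ j, φ k j = 1)
    (hφaps : ∀ k, 1 ≤ k → ∀ j, φ k j = ∑ i, φ (k + 1) i * A k i j)
    (C β : ℝ) (hC : 0 < C) (hβ : β ∈ Set.Ioo (0 : ℝ) 1)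
    (hgeo : ∀ s k, 1 ≤ s → s ≤ k →
      frobNorm (fun i j => PhiA A s (k - s) i j - φ s j) ≤ C * β ^ (k - s))
    (ω : ℕ → Matrix (Fin N) (Fin r) ℝ) (d : ℕ → Matrix (Fin N) (Fin r) ℝ)
    (hrec : ∀ k, 1 ≤ k → ω (k + 1) = A k * ω k + d k)
    (K : ℝ) (hK : 0 < K) (α : ℕ → ℝ)
    (hd : ∀ k, 1 ≤ k → frobNorm (d k) ≤ K * α k) :
    ∃ C₂ C₃ C₄ : ℝ, 0 < C₂ ∧ 0 < C₃ ∧ 0 < C₄ ∧ ∀ k, 1 ≤ k →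
      frobNorm (fun i c => ω (k + 1) i c - ∑ j, φ (k + 1) j * ω (k + 1) j c)
        ≤ C₂ * β ^ (k - 1) + C₃ * ∑ l ∈ Finset.Ico 1 k, β ^ (k - 1 - l) * α l
            + C₄ * α k := by
  have hmix : ∀ s t, 1 ≤ s → ‖PhiA A s t - replicateRow (Fin N) (φ s)‖ ≤ C * β ^ t := by
    intro s t hs
    have h := hgeo s (s + t) hs (by omega)
    rw [Nat.add_sub_cancel_left] at h
    exact frobNorm_eq_norm (PhiA A s t - replicateRow (Fin N) (φ s)) ▸ h
  have hdnorm : ∀ k, 1 ≤ k → ‖d k‖ ≤ K * α k := fun k hk => frobNorm_eq_norm (d k) ▸ hd k hk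
  refine ⟨C * (‖ω 1‖ + 1), C * K, (1 + √N) * K, by positivity, by positivity, by positivity, ?_⟩
  intro k hk
  obtain ⟨t, rfl⟩ : ∃ t, k = t + 1 := ⟨k - 1, by omega⟩
  have hconsensus : (fun i c => ω (t + 1 + 1) i c - ∑ j, φ (t + 1 + 1) j * ω (t + 1 + 1) j c)
      = ω (t + 2) - replicateRow (Fin N) (φ (t + 2)) * ω (t + 2) := by
    ext i c
    simp [mul_apply]
  rw [hconsensus, frobNorm_eq_norm, Nat.add_sub_cancel]
  refine (norm_sub_replicateRow_mul_le hφstoch hφaps hmix hrec hdnorm t).trans ?_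
  have hβt : 0 < C * β ^ t := mul_pos hC (pow_pos hβ.1 t)
  nlinarith

/-- Let {A_k}_{k≥1} be N×N row-stochastic matrices with an absolute
probability sequence {φ_k} and geometric mixing ‖Φ_A(k,s) − 1_N φ_sᵀ‖ ≤ C β^{k−s}.
Let ω^{k+1} = A_k ω^k + d^k with ‖d^k‖ ≤ K α_k, α_k ≥ 0. Then there are constants
C₂, C₃, C₄ > 0 such that for all k ≥ 1,
‖ω^{k+1} − 1_N φ_{k+1}ᵀ ω^{k+1}‖ ≤ C₂ β^{k−1} + C₃ ∑_{l=1}^{k−1} β^{k−1−l} α_l + C₄ α_k. -/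
theorem stmt10 (N r : ℕ) (hN : 1 ≤ N) (hr : 1 ≤ r)
    (A : ℕ → Matrix (Fin N) (Fin N) ℝ)
    (hAnn : ∀ k, 1 ≤ k → ∀ i j, 0 ≤ A k i j)
    (hArow : ∀ k, 1 ≤ k → ∀ i, ∑ j, A k i j = 1)
    (φ : ℕ → Fin N → ℝ)
    (hφstoch : ∀ k, (∀ j, 0 ≤ φ k j) ∧ ∑ j, φ k j = 1)
    (hφaps : ∀ k, 1 ≤ k → ∀ j, φ k j = ∑ i, φ (k + 1) i * A k i j)
    (C β : ℝ) (hC : 0 < C) (hβ : β ∈ Set.Ioo (0 : ℝ) 1)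
    (hgeo : ∀ s k, 1 ≤ s → s ≤ k →
      frobNorm (fun i j => PhiA A s (k - s) i j - φ s j) ≤ C * β ^ (k - s))
    (ω : ℕ → Matrix (Fin N) (Fin r) ℝ) (d : ℕ → Matrix (Fin N) (Fin r) ℝ)
    (hrec : ∀ k, 1 ≤ k → ω (k + 1) = A k * ω k + d k)
    (K : ℝ) (hK : 0 < K) (α : ℕ → ℝ) (hα : ∀ k, 0 ≤ α k)
    (hd : ∀ k, 1 ≤ k → frobNorm (d k) ≤ K * α k) :
    ∃ C₂ C₃ C₄ : ℝ, 0 < C₂ ∧ 0 < C₃ ∧ 0 < C₄ ∧ ∀ k, 1 ≤ k →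
      frobNorm (fun i c => ω (k + 1) i c - ∑ j, φ (k + 1) j * ω (k + 1) j c)
        ≤ C₂ * β ^ (k - 1) + C₃ * ∑ l ∈ Finset.Ico 1 k, β ^ (k - 1 - l) * α l
            + C₄ * α k :=
  stmt10_general N r A φ hφstoch hφaps C β hC hβ hgeo ω d hrec K hK α hd
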